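/- arXiv:cs/0301016 — 2 statements merged into one kernel-verified Lean document; each statement's English description precedes it below -/
import Mathlib

section
/- If A ∈ ℂ^{m×n} has singular values σ_1 ≥ … ≥ σ_p with p = min(m,n), then avol_r(A)² equals the r-th elementary symmetric polynomial in σ_1², …, σ_p², i.e. avol_r(A)² = Σ_{|I|=r} Π_{i∈I} σ_i². -/
/-!
By Cauchy–Binet, `∑_J |det A_{I,J}|² = det (A A*)_{I,I}`, so `avol_r(A)²` is the sum of the
principal `r × r` minors of `A A*`, which is (up to sign) a coefficient of its characteristic
polynomial. For `A = U Σ V` with `U`, `V` unitary, `A A*` has the same characteristic polynomial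
as `Σ Σ* = diag(σ₁², …, σ_p², 0, …, 0)`, whose principal `r × r` minors sum to `e_r(σ₁², …, σ_p²)`.
-/

open Matrix Finset

/-- The square of the `r`-mean square volume: `avol_r(A)² = Σ_{|I|=|J|=r} |det A_{I,J}|²`. -/
noncomputable def avolSq (r : ℕ) {m n : ℕ} (A : Matrix (Fin m) (Fin n) ℂ) : ℝ :=
  ∑ I ∈ ((Finset.univ : Finset (Fin m)).powersetCard r).attach,
    ∑ J ∈ ((Finset.univ : Finset (Fin n)).powersetCard r).attach,
      ‖Matrix.det (A.submatrix
        (I.1.orderEmbOfFin ((Finset.mem_powersetCard.mp I.2).2))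
        (J.1.orderEmbOfFin ((Finset.mem_powersetCard.mp J.2).2)))‖ ^ 2

/-- `σ : Fin (min m n) → ℝ` is the decreasing sequence of singular values of `A`:
nonnegative, antitone, and `A` has a singular value decomposition with these values. -/
def IsSingularValues {m n : ℕ} (A : Matrix (Fin m) (Fin n) ℂ)
    (σ : Fin (min m n) → ℝ) : Prop :=
  Antitone σ ∧ (∀ i, 0 ≤ σ i) ∧
  ∃ U ∈ Matrix.unitaryGroup (Fin m) ℂ, ∃ V ∈ Matrix.unitaryGroup (Fin n) ℂ,
    A = U * (Matrix.of fun (i : Fin m) (j : Fin n) =>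
        if h : (i : ℕ) = (j : ℕ) ∧ (i : ℕ) < min m n
        then (σ ⟨(i : ℕ), h.2⟩ : ℂ) else 0) * V

theorem Function.Injective.exists_perm_comp_eq {α β : Type*} {f g : α → β}
    (hf : Function.Injective f) (hg : Function.Injective g) (h : Set.range f = Set.range g) :
    ∃ τ : Equiv.Perm α, f ∘ τ = g :=
  ⟨(Equiv.ofInjective g hg).trans ((Equiv.setCongr h.symm).trans (Equiv.ofInjective f hf).symm),
    funext fun _ => Equiv.apply_ofInjective_symm hf _⟩

namespace Matrix

variable {R : Type*} [CommRing R] {ι : Type*}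

theorem det_mul_eq_sum_prod_mul_det_submatrix {κ : Type*} [Fintype κ] [DecidableEq κ]
    [Fintype ι] (M : Matrix κ ι R) (N : Matrix ι κ R) :
    det (M * N) = ∑ p : κ → ι, (∏ j, N (p j) j) * det (M.submatrix id p) := by
  rw [det_apply']
  simp only [mul_apply, prod_univ_sum, Fintype.piFinset_univ, mul_sum]
  rw [sum_comm]
  refine sum_congr rfl fun p _ => ?_
  rw [← det_mul_row (fun j => N (p j) j) (M.submatrix id p), det_apply']
  refine sum_congr rfl fun τ _ => ?_
  congr 1
  exact prod_congr rfl fun i _ => by simp [mul_comm]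

theorem det_submatrix_mul_det_submatrix_eq_sum_perm {κ : Type*} [Fintype κ] [DecidableEq κ]
    (M : Matrix κ ι R) (N : Matrix ι κ R) (e : κ → ι) :
    det (M.submatrix id e) * det (N.submatrix e id) =
      ∑ τ : Equiv.Perm κ, (∏ j, N (e (τ j)) j) * det (M.submatrix id (e ∘ τ)) := by
  rw [mul_comm, det_apply', sum_mul]
  refine sum_congr rfl fun τ _ => ?_
  rw [show M.submatrix id (e ∘ τ) = (M.submatrix id e).submatrix id τ from rfl, det_permute']
  simp only [submatrix_apply, id_eq]
  ring

/-- The Cauchy–Binet formula. -/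
theorem det_mul_eq_sum_det_submatrix_mul_det_submatrix [Fintype ι] [LinearOrder ι] {r : ℕ}
    (M : Matrix (Fin r) ι R) (N : Matrix ι (Fin r) R) :
    det (M * N) = ∑ s ∈ (univ.powersetCard r).attach,
      det (M.submatrix id (s.1.orderEmbOfFin (mem_powersetCard.mp s.2).2)) *
        det (N.submatrix (s.1.orderEmbOfFin (mem_powersetCard.mp s.2).2) id) := by
  have hinj : ∀ p : Fin r → ι, (∏ j, N (p j) j) * det (M.submatrix id p) ≠ 0 →
      Function.Injective p := fun p hp => by
    by_contra hp'
    obtain ⟨i, j, hpij, hij⟩ := Function.not_injective_iff.mp hp'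
    exact hp (by rw [det_zero_of_column_eq hij fun k => by simp [hpij], mul_zero])
  rw [det_mul_eq_sum_prod_mul_det_submatrix, ← sum_filter_of_ne fun p _ => hinj p]
  simp_rw [det_submatrix_mul_det_submatrix_eq_sum_perm, ← sum_product']
  -- an injective `p : Fin r → ι` is `(orderEmbOfFin s) ∘ τ` for a unique `s` and permutation `τ`
  symm
  refine sum_bij (fun x _ => x.1.1.orderEmbOfFin (mem_powersetCard.mp x.1.2).2 ∘ x.2)
    (fun x _ => ?_) (fun x _ y _ hxy => ?_) (fun p hp => ?_) (fun _ _ => rfl)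
  · exact mem_filter.mpr ⟨mem_univ _, (orderEmbOfFin _ _).injective.comp x.2.injective⟩
  · have hs : x.1 = y.1 := Subtype.ext <| coe_injective <| by
      simpa [EquivLike.range_comp] using congrArg Set.range hxy
    obtain ⟨⟨s, _⟩, τ⟩ := x
    obtain ⟨⟨t, _⟩, υ⟩ := y
    obtain rfl : s = t := congrArg Subtype.val hs
    exact Prod.ext hs (Equiv.ext fun j => (orderEmbOfFin _ _).injective (congrFun hxy j))
  · have hp : Function.Injective p := (mem_filter.mp hp).2
    have hmem : univ.image p ∈ univ.powersetCard r :=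
      mem_powersetCard.mpr ⟨subset_univ _, by rw [card_image_of_injective _ hp, card_fin]⟩
    obtain ⟨τ, hτ⟩ :=
      (orderEmbOfFin _ (mem_powersetCard.mp hmem).2).injective.exists_perm_comp_eq hp (by simp)
    exact ⟨(⟨_, hmem⟩, τ), mem_product.mpr ⟨mem_attach _ _, mem_univ _⟩, hτ⟩

theorem ofReal_sum_norm_sq_det_submatrix {𝕜 : Type*} [RCLike 𝕜] {m : Type*} [Fintype ι]
    [LinearOrder ι] {r : ℕ} (A : Matrix m ι 𝕜) (e : Fin r → m) :
    ((∑ J ∈ (univ.powersetCard r).attach,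
      ‖det (A.submatrix e (J.1.orderEmbOfFin (mem_powersetCard.mp J.2).2))‖ ^ 2 : ℝ) : 𝕜) =
      det ((A * Aᴴ).submatrix e e) := by
  rw [submatrix_mul _ _ _ _ _ Function.bijective_id, ← conjTranspose_submatrix,
    det_mul_eq_sum_det_submatrix_mul_det_submatrix]
  push_cast
  refine sum_congr rfl fun J _ => ?_
  rw [← RCLike.mul_conj, ← conjTranspose_submatrix, det_conjTranspose]
  rfl

theorem det_submatrix_orderEmbOfFin [LinearOrder ι] (M : Matrix ι ι R) (s : Finset ι) {r : ℕ}
    (h : s.card = r) :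
    det (M.submatrix (s.orderEmbOfFin h) (s.orderEmbOfFin h)) =
      det (M.submatrix (Subtype.val : s → ι) Subtype.val) := by
  rw [← det_submatrix_equiv_self (s.orderIsoOfFin h).toEquiv]
  rfl

theorem sum_minors_eq_of_charpoly_eq [Fintype ι] [DecidableEq ι] {M N : Matrix ι ι R}
    (h : M.charpoly = N.charpoly) (k : ℕ) :
    ∑ s ∈ univ.powersetCard k, det (M.submatrix (Subtype.val : s → ι) Subtype.val) =
      ∑ s ∈ univ.powersetCard k, det (N.submatrix (Subtype.val : s → ι) Subtype.val) := by
  by_cases hk : k ≤ Fintype.card ι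
  · have hcoeff := charpoly_coeff_eq_sum_minors M k hk
    rw [h, charpoly_coeff_eq_sum_minors N k hk] at hcoeff
    exact ((isUnit_neg_one.pow k).mul_left_cancel hcoeff).symm
  · simp [powersetCard_eq_empty.mpr (not_le.mp hk)]

theorem sum_minors_diagonal [Fintype ι] [DecidableEq ι] (d : ι → R) (k : ℕ) :
    ∑ s ∈ univ.powersetCard k, det ((diagonal d).submatrix (Subtype.val : s → ι) Subtype.val) =
      ∑ s ∈ univ.powersetCard k, ∏ i ∈ s, d i := by
  simp [submatrix_diagonal _ _ Subtype.val_injective, det_diagonal, prod_attach]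

theorem charpoly_mul_conjTranspose_unitary_mul_unitary [StarRing R] {m n : Type*}
    [Fintype m] [DecidableEq m] [Fintype n] [DecidableEq n] {U : Matrix m m R}
    (hU : U ∈ unitaryGroup m R) {V : Matrix n n R} (hV : V ∈ unitaryGroup n R)
    (B : Matrix m n R) :
    (U * B * V * (U * B * V)ᴴ).charpoly = (B * Bᴴ).charpoly := by
  have hVV : V * Vᴴ = 1 := mem_unitaryGroup_iff.mp hV
  have hUU : Uᴴ * U = 1 := mem_unitaryGroup_iff'.mp hU
  simp only [conjTranspose_mul, Matrix.mul_assoc]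
  rw [← Matrix.mul_assoc V, hVV, Matrix.one_mul, charpoly_mul_comm, Matrix.mul_assoc,
    Matrix.mul_assoc, hUU, Matrix.mul_one]

end Matrix

def padZero {R : Type*} [Zero R] {k : ℕ} (m : ℕ) (g : Fin k → R) (i : Fin m) : R :=
  if h : (i : ℕ) < k then g ⟨i, h⟩ else 0

theorem sum_powersetCard_prod_padZero {R : Type*} [CommSemiring R] {k m : ℕ} (hkm : k ≤ m)
    (g : Fin k → R) (r : ℕ) :
    ∑ s ∈ (univ : Finset (Fin m)).powersetCard r, ∏ i ∈ s, padZero m g i =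
      ∑ t ∈ (univ : Finset (Fin k)).powersetCard r, ∏ i ∈ t, g i := by
  have hsub : (univ.map (Fin.castLEEmb hkm)).powersetCard r ⊆ univ.powersetCard r :=
    powersetCard_mono (subset_univ _)
  rw [← sum_subset hsub, powersetCard_map, sum_map]
  · exact sum_congr rfl fun t _ => by simp [padZero]
  · intro s hs hs'
    obtain ⟨i, his, hi⟩ : ∃ i ∈ s, ¬ (i : ℕ) < k := by
      by_contra! h
      refine hs' (mem_powersetCard.mpr ⟨fun i hi => ?_, (mem_powersetCard.mp hs).2⟩)
      exact mem_map.mpr ⟨⟨i, h i hi⟩, mem_univ _, rfl⟩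
    exact prod_eq_zero his (dif_neg hi)

noncomputable def rectDiagonal {m n : ℕ} (σ : Fin (min m n) → ℝ) : Matrix (Fin m) (Fin n) ℂ :=
  Matrix.of fun i j => if h : (i : ℕ) = (j : ℕ) ∧ (i : ℕ) < min m n then (σ ⟨i, h.2⟩ : ℂ) else 0

theorem rectDiagonal_mul_conjTranspose {m n : ℕ} (σ : Fin (min m n) → ℝ) :
    rectDiagonal σ * (rectDiagonal σ)ᴴ =
      diagonal fun i => ((padZero m (fun k => σ k ^ 2) i : ℝ) : ℂ) := by
  ext i j
  simp only [mul_apply, conjTranspose_apply, rectDiagonal, of_apply, diagonal_apply, padZero]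
  rcases eq_or_ne i j with rfl | hij
  · rw [if_pos rfl]
    split_ifs with hi
    · rw [sum_eq_single ⟨i, hi.trans_le (min_le_right m n)⟩]
      · simp [hi, sq]
      · intro l _ hl
        rw [dif_neg fun h => hl (Fin.ext h.1.symm), zero_mul]
      · simp
    · exact sum_eq_zero fun l _ => by rw [dif_neg fun h => hi h.2, zero_mul]
  · rw [if_neg hij]
    refine sum_eq_zero fun l _ => ?_
    split_ifs <;> simp_all [Fin.ext_iff]

theorem avolSq_eq_esymm_singularValues_general {m n r : ℕ}
    (A : Matrix (Fin m) (Fin n) ℂ) (σ : Fin (min m n) → ℝ)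
    (hσ : IsSingularValues A σ) :
    avolSq r A =
      ∑ I ∈ ((Finset.univ : Finset (Fin (min m n))).powersetCard r), ∏ i ∈ I, σ i ^ 2 := by
  obtain ⟨-, -, U, hU, V, hV, hA⟩ := hσ
  replace hA : A = U * rectDiagonal σ * V := hA
  have hchar : (A * Aᴴ).charpoly =
      (diagonal fun i => ((padZero m (fun k => σ k ^ 2) i : ℝ) : ℂ)).charpoly := by
    rw [hA, charpoly_mul_conjTranspose_unitary_mul_unitary hU hV, rectDiagonal_mul_conjTranspose]
  apply Complex.ofReal_injective
  calc ((avolSq r A : ℝ) : ℂ)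
      = ∑ s ∈ (univ : Finset (Fin m)).powersetCard r,
          det ((A * Aᴴ).submatrix (Subtype.val : s → Fin m) Subtype.val) := by
        rw [avolSq, Complex.ofReal_sum]
        conv_rhs => rw [← sum_attach]
        refine sum_congr rfl fun I _ => ?_
        rw [← det_submatrix_orderEmbOfFin _ _ (mem_powersetCard.mp I.2).2,
          ← RCLike.ofReal_eq_complex_ofReal]
        exact ofReal_sum_norm_sq_det_submatrix A _
    _ = ∑ s ∈ univ.powersetCard r, ∏ i ∈ s, ((padZero m (fun k => σ k ^ 2) i : ℝ) : ℂ) := by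
        rw [sum_minors_eq_of_charpoly_eq hchar, sum_minors_diagonal]
    _ = _ := mod_cast sum_powersetCard_prod_padZero (min_le_left m n) _ r

/-- `avol_r(A)²` is the `r`-th elementary symmetric polynomial in the squares of
the singular values of `A`. -/
theorem avolSq_eq_esymm_singularValues {m n r : ℕ} (hr : 1 ≤ r) (hrp : r ≤ min m n)
    (A : Matrix (Fin m) (Fin n) ℂ) (σ : Fin (min m n) → ℝ)
    (hσ : IsSingularValues A σ) :
    avolSq r A =
      ∑ I ∈ ((Finset.univ : Finset (Fin (min m n))).powersetCard r), ∏ i ∈ I, σ i ^ 2 :=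
  avolSq_eq_esymm_singularValues_general A σ hσ
end

section
/- For A ∈ ℂ^{m×n} with columns a_1,…,a_n, the geometric rigidity Rig_r(A) := min over r-dimensional subspaces V of max_i dist(a_i, V) satisfies (1/√n)·σ_{r+1}(A) ≤ Rig_r(A) ≤ σ_{r+1}(A). -/
open Matrix Finset

/-- The maximum euclidean distance of the columns of `A` to the subspace `V`. -/
noncomputable def colDistSup {m n : ℕ} (A : Matrix (Fin m) (Fin n) ℂ)
    (V : Submodule ℂ (EuclideanSpace ℂ (Fin m))) : ℝ :=
  ⨆ j : Fin n, Metric.infDist (show EuclideanSpace ℂ (Fin m) from WithLp.toLp 2 (fun i => A i j)) (V : Set (EuclideanSpace ℂ (Fin m)))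

/-- Geometric rigidity: `Rig_r(A)` is the least possible maximum distance of the
columns of `A` to an `r`-dimensional subspace. -/
noncomputable def Rig (r : ℕ) {m n : ℕ} (A : Matrix (Fin m) (Fin n) ℂ) : ℝ :=
  sInf {x : ℝ | ∃ V : Submodule ℂ (EuclideanSpace ℂ (Fin m)),
    Module.finrank ℂ V = r ∧ x = colDistSup A V}


/-! The singular value decomposition writes `A x = ∑ₗ σₗ ⟪wₗ, x⟫ uₗ` with orthonormal families
`u`, `w` (indices start at `0`, so the paper's `σ_{r+1}` is `σ ⟨r, _⟩`). For the upper bound take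
`V = span {u₀, …, u_{r-1}}`: what remains of `A x` has norm at most `σ_r ‖x‖` by Bessel's
inequality, and the columns are `A eⱼ`. For the lower bound, projecting `A` restricted to
`span {w₀, …, w_r}` onto an `r`-dimensional `V` has a kernel, so some `x ≠ 0` there has `A x ⊥ V`,
and `σ_r ‖x‖ ≤ ‖A x‖ = dist (∑ⱼ xⱼ aⱼ, V) ≤ ∑ⱼ |xⱼ| dist (aⱼ, V) ≤ √n ‖x‖ maxⱼ dist (aⱼ, V)`
because the distance to a subspace is a seminorm. -/

open scoped InnerProductSpace

variable {𝕜 E F : Type*} [RCLike 𝕜] [NormedAddCommGroup E] [InnerProductSpace 𝕜 E]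
  [NormedAddCommGroup F] [InnerProductSpace 𝕜 F]

namespace Submodule

variable (K : Submodule 𝕜 F) [K.HasOrthogonalProjection]

theorem infDist_eq_norm_sub_starProjection (y : F) :
    Metric.infDist y K = ‖y - K.starProjection y‖ := by
  rw [starProjection_minimal, Metric.infDist_eq_iInf]
  simp only [dist_eq_norm]
  rfl

theorem infDist_eq_norm_of_mem_orthogonal {y : F} (hy : y ∈ Kᗮ) :
    Metric.infDist y K = ‖y‖ := by
  rw [infDist_eq_norm_sub_starProjection, starProjection_apply,
    orthogonalProjectionOnto_apply_of_mem_orthogonal hy, ZeroMemClass.coe_zero, sub_zero]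

theorem infDist_sum_smul_le {ι : Type*} (s : Finset ι) (c : ι → 𝕜) (a : ι → F) :
    Metric.infDist (∑ j ∈ s, c j • a j) K ≤ ∑ j ∈ s, ‖c j‖ * Metric.infDist (a j) K := by
  simp only [infDist_eq_norm_sub_starProjection, map_sum, map_smul, ← Finset.sum_sub_distrib,
    ← smul_sub, ← norm_smul]
  exact norm_sum_le _ _

end Submodule

theorem LinearMap.exists_ne_zero_apply_mem_orthogonal (T : E →ₗ[𝕜] F) {X : Submodule 𝕜 E}
    {K : Submodule 𝕜 F} [FiniteDimensional 𝕜 X] [FiniteDimensional 𝕜 K]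
    (h : Module.finrank 𝕜 K < Module.finrank 𝕜 X) : ∃ x ∈ X, x ≠ 0 ∧ T x ∈ Kᗮ := by
  obtain ⟨x, hx, hx0⟩ := (Submodule.ne_bot_iff _).mp <| LinearMap.ker_ne_bot_of_finrank_lt
    (f := K.orthogonalProjectionOnto.toLinearMap ∘ₗ T ∘ₗ X.subtype) h
  exact ⟨x, x.2, by simpa using hx0,
    Submodule.orthogonalProjectionOnto_eq_zero_iff.mp (LinearMap.mem_ker.mp hx)⟩

theorem EuclideanSpace.sum_norm_le_sqrt_card_mul_norm {ι : Type*} [Fintype ι]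
    (x : EuclideanSpace 𝕜 ι) : ∑ i, ‖x i‖ ≤ √(Fintype.card ι) * ‖x‖ := by
  simpa [EuclideanSpace.norm_eq] using
    Real.sum_mul_le_sqrt_mul_sqrt Finset.univ (fun _ => 1) (fun i => ‖x i‖)

namespace Orthonormal

variable {ι : Type*} {u : ι → F} {w : ι → E}

theorem norm_sum_smul_sq (hu : Orthonormal 𝕜 u) (s : Finset ι) (c : ι → 𝕜) :
    ‖∑ i ∈ s, c i • u i‖ ^ 2 = ∑ i ∈ s, ‖c i‖ ^ 2 :=
  hu.orthogonalFamily.norm_sum c s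

theorem norm_sum_smul_inner_le (hu : Orthonormal 𝕜 u) (hw : Orthonormal 𝕜 w) (s : Finset ι)
    {τ : ι → ℝ} {b : ℝ} (hb : 0 ≤ b) (hτ : ∀ i ∈ s, |τ i| ≤ b) (x : E) :
    ‖∑ i ∈ s, ((τ i : 𝕜) * ⟪w i, x⟫_𝕜) • u i‖ ≤ b * ‖x‖ := by
  refine (pow_le_pow_iff_left₀ (norm_nonneg _) (by positivity) two_ne_zero).mp ?_
  calc ‖∑ i ∈ s, ((τ i : 𝕜) * ⟪w i, x⟫_𝕜) • u i‖ ^ 2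
      = ∑ i ∈ s, |τ i| ^ 2 * ‖⟪w i, x⟫_𝕜‖ ^ 2 := by
        simp [hu.norm_sum_smul_sq, mul_pow]
    _ ≤ ∑ i ∈ s, b ^ 2 * ‖⟪w i, x⟫_𝕜‖ ^ 2 := by
        gcongr with i hi
        exact hτ i hi
    _ ≤ (b * ‖x‖) ^ 2 := by
        rw [← Finset.mul_sum, mul_pow]
        gcongr
        exact hw.sum_inner_products_le x

theorem mul_norm_le_norm_apply_of_mem_span [Fintype ι] (hu : Orthonormal 𝕜 u)
    (hw : Orthonormal 𝕜 w) {T : E →ₗ[𝕜] F} {τ : ι → ℝ} (hT : ∀ i, T (w i) = (τ i : 𝕜) • u i)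
    {b : ℝ} (hb : 0 ≤ b) (hτ : ∀ i, b ≤ |τ i|) {x : E}
    (hx : x ∈ Submodule.span 𝕜 (Set.range w)) : b * ‖x‖ ≤ ‖T x‖ := by
  obtain ⟨c, rfl⟩ := Submodule.mem_span_range_iff_exists_fun 𝕜 |>.mp hx
  refine (pow_le_pow_iff_left₀ (by positivity) (norm_nonneg _) two_ne_zero).mp ?_
  calc (b * ‖∑ i, c i • w i‖) ^ 2 = ∑ i, b ^ 2 * ‖c i‖ ^ 2 := by
        rw [mul_pow, hw.norm_sum_smul_sq, Finset.mul_sum]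
    _ ≤ ∑ i, |τ i| ^ 2 * ‖c i‖ ^ 2 := by
        gcongr with i
        exact hτ i
    _ = ‖T (∑ i, c i • w i)‖ ^ 2 := by
        simp [hT, smul_smul, hu.norm_sum_smul_sq, mul_pow, mul_comm]

end Orthonormal

section SingularExpansion

variable {k : ℕ} {σ : Fin k → ℝ} {u : Fin k → F} {w : Fin k → E}

theorem infDist_sum_smul_inner_span_le (hu : Orthonormal 𝕜 u) (hw : Orthonormal 𝕜 w)
    (hσ : Antitone σ) (hσ0 : ∀ l, 0 ≤ σ l) {r : ℕ} (hr : r < k) (x : E) :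
    Metric.infDist (∑ l, ((σ l : 𝕜) * ⟪w l, x⟫_𝕜) • u l)
        (Submodule.span 𝕜 (Set.range (u ∘ Fin.castLE hr.le))) ≤ σ ⟨r, hr⟩ * ‖x‖ := by
  rw [← Finset.sum_filter_add_sum_filter_not Finset.univ (fun l : Fin k => (l : ℕ) < r)]
  set head := ∑ l ∈ Finset.univ.filter (fun l : Fin k => (l : ℕ) < r),
    ((σ l : 𝕜) * ⟪w l, x⟫_𝕜) • u l
  have hhead : head ∈ Submodule.span 𝕜 (Set.range (u ∘ Fin.castLE hr.le)) :=
    Submodule.sum_mem _ fun l hl => Submodule.smul_mem _ _ <|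
      Submodule.subset_span ⟨⟨l, (Finset.mem_filter.mp hl).2⟩, rfl⟩
  refine (Metric.infDist_le_dist_of_mem hhead).trans ?_
  rw [dist_eq_norm, add_sub_cancel_left]
  refine hu.norm_sum_smul_inner_le hw _ (hσ0 _) (fun l hl => ?_) x
  rw [abs_of_nonneg (hσ0 l)]
  exact hσ (not_lt.mp (Finset.mem_filter.mp hl).2)

theorem exists_ne_zero_apply_mem_orthogonal_and_mul_norm_le (hu : Orthonormal 𝕜 u)
    (hw : Orthonormal 𝕜 w) (hσ : Antitone σ) (hσ0 : ∀ l, 0 ≤ σ l) {T : E →ₗ[𝕜] F}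
    (hT : ∀ l, T (w l) = (σ l : 𝕜) • u l) (K : Submodule 𝕜 F) [FiniteDimensional 𝕜 K]
    {r : ℕ} (hr : r < k) (hK : Module.finrank 𝕜 K ≤ r) :
    ∃ x ≠ 0, T x ∈ Kᗮ ∧ σ ⟨r, hr⟩ * ‖x‖ ≤ ‖T x‖ := by
  have hw' := hw.comp _ (Fin.castLE_injective (hr : r + 1 ≤ k))
  have : FiniteDimensional 𝕜 (Submodule.span 𝕜 (Set.range (w ∘ Fin.castLE hr))) :=
    FiniteDimensional.span_of_finite 𝕜 (Set.finite_range _)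
  have hrank : Module.finrank 𝕜 K <
      Module.finrank 𝕜 (Submodule.span 𝕜 (Set.range (w ∘ Fin.castLE hr))) := by
    rw [finrank_span_eq_card hw'.linearIndependent, Fintype.card_fin]
    exact Nat.lt_succ_of_le hK
  obtain ⟨x, hxX, hx0, hxK⟩ := T.exists_ne_zero_apply_mem_orthogonal hrank
  refine ⟨x, hx0, hxK, ?_⟩
  refine (hu.comp _ (Fin.castLE_injective hr)).mul_norm_le_norm_apply_of_mem_span hw'
    (fun i => hT _) (hσ0 _) (fun i => ?_) hxX
  rw [abs_of_nonneg (hσ0 _)]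
  exact hσ (Fin.mk_le_mk.mpr (Nat.lt_succ_iff.mp i.2))

end SingularExpansion

namespace Matrix

theorem orthonormal_col_of_mem_unitaryGroup {ι : Type*} [Fintype ι] [DecidableEq ι]
    {U : Matrix ι ι 𝕜} (hU : U ∈ unitaryGroup ι 𝕜) :
    Orthonormal 𝕜 fun j => WithLp.toLp 2 (U.col j) := by
  rw [orthonormal_iff_ite]
  intro i j
  rw [← one_apply, ← mem_unitaryGroup_iff'.mp hU, star_eq_conjTranspose]
  exact inner_matrix_col_col U U i j

theorem toEuclideanLin_eq_sum_col {ι κ : Type*} [Fintype κ] [DecidableEq κ]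
    (A : Matrix ι κ 𝕜) (x : EuclideanSpace 𝕜 κ) :
    toEuclideanLin A x = ∑ j, x j • WithLp.toLp 2 (A.col j) := by
  ext i
  simp [toLpLin_apply, mulVec, dotProduct, mul_comm]

theorem of_dite_mulVec {m n : ℕ} (σ : Fin (min m n) → ℝ) (y : Fin n → ℂ) :
    (of fun (i : Fin m) (j : Fin n) =>
        if h : (i : ℕ) = (j : ℕ) ∧ (i : ℕ) < min m n then (σ ⟨(i : ℕ), h.2⟩ : ℂ) else 0) *ᵥ y =
      ∑ l : Fin (min m n), ((σ l : ℂ) * y (Fin.castLE (min_le_right m n) l)) •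
        Pi.single (Fin.castLE (min_le_left m n) l) 1 := by
  ext i
  simp only [mulVec, dotProduct, of_apply, Finset.sum_apply, Pi.smul_apply, Pi.single_apply,
    smul_eq_mul, mul_ite, mul_one, mul_zero]
  by_cases hi : (i : ℕ) < min m n
  · rw [Fintype.sum_eq_single (Fin.castLE (min_le_right m n) ⟨i, hi⟩),
      Fintype.sum_eq_single ⟨i, hi⟩]
    · simp [hi]
    · exact fun l hl => if_neg fun h : i = _ => hl (Fin.ext (congrArg Fin.val h).symm)
    · exact fun j hj => by rw [dif_neg fun h => hj (Fin.ext (by simp [h.1])), zero_mul]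
  · rw [Finset.sum_eq_zero, Finset.sum_eq_zero]
    · exact fun l _ => if_neg fun h : i = _ => hi (by rw [h]; exact l.2)
    · exact fun j _ => by rw [dif_neg fun h => hi h.2, zero_mul]

end Matrix

section Rigidity

variable {m n : ℕ}

theorem IsSingularValues.exists_orthonormal_toEuclideanLin_eq_sum
    {A : Matrix (Fin m) (Fin n) ℂ} {σ : Fin (min m n) → ℝ} (hσ : IsSingularValues A σ) :
    ∃ u : Fin (min m n) → EuclideanSpace ℂ (Fin m),
      ∃ w : Fin (min m n) → EuclideanSpace ℂ (Fin n), Orthonormal ℂ u ∧ Orthonormal ℂ w ∧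
        ∀ x, toEuclideanLin A x = ∑ l, ((σ l : ℂ) * ⟪w l, x⟫_ℂ) • u l := by
  obtain ⟨-, -, U, hU, V, hV, rfl⟩ := hσ
  refine ⟨fun l => WithLp.toLp 2 (U.col (Fin.castLE (min_le_left m n) l)),
    fun l => WithLp.toLp 2 (Vᴴ.col (Fin.castLE (min_le_right m n) l)),
    (orthonormal_col_of_mem_unitaryGroup hU).comp _ (Fin.castLE_injective _),
    (orthonormal_col_of_mem_unitaryGroup (Unitary.star_mem hV)).comp _ (Fin.castLE_injective _),
    fun x => ?_⟩
  have hinner : ∀ j, ⟪WithLp.toLp 2 (Vᴴ.col j), x⟫_ℂ = (V *ᵥ WithLp.ofLp x) j := fun j => by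
    simp [EuclideanSpace.inner_eq_star_dotProduct, mulVec, dotProduct, mul_comm]
  simp only [hinner]
  rw [toLpLin_apply, ← mulVec_mulVec, ← mulVec_mulVec, of_dite_mulVec, mulVec_sum]
  ext i
  simp [mulVec_smul]

theorem colDistSup_nonneg (A : Matrix (Fin m) (Fin n) ℂ)
    (K : Submodule ℂ (EuclideanSpace ℂ (Fin m))) : 0 ≤ colDistSup A K :=
  Real.iSup_nonneg fun _ => Metric.infDist_nonneg

theorem infDist_col_le_colDistSup (A : Matrix (Fin m) (Fin n) ℂ)
    (K : Submodule ℂ (EuclideanSpace ℂ (Fin m))) (j : Fin n) :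
    Metric.infDist (WithLp.toLp 2 (A.col j) : EuclideanSpace ℂ (Fin m)) K ≤ colDistSup A K :=
  le_ciSup (f := fun j => Metric.infDist (WithLp.toLp 2 (A.col j) : EuclideanSpace ℂ (Fin m)) K)
    (Set.finite_range _).bddAbove j

theorem colDistSup_le {A : Matrix (Fin m) (Fin n) ℂ}
    {K : Submodule ℂ (EuclideanSpace ℂ (Fin m))} {b : ℝ} (hb : 0 ≤ b)
    (h : ∀ x, Metric.infDist (toEuclideanLin A x) K ≤ b * ‖x‖) : colDistSup A K ≤ b :=
  Real.iSup_le (fun j => show Metric.infDist (WithLp.toLp 2 (A.col j)) K ≤ b by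
    simpa [toEuclideanLin_eq_sum_col] using h (EuclideanSpace.single j 1)) hb

theorem le_sqrt_mul_colDistSup_of_mem_orthogonal (A : Matrix (Fin m) (Fin n) ℂ)
    (K : Submodule ℂ (EuclideanSpace ℂ (Fin m))) {x : EuclideanSpace ℂ (Fin n)} (hx0 : x ≠ 0)
    (hx : toEuclideanLin A x ∈ Kᗮ) {s : ℝ} (hs : s * ‖x‖ ≤ ‖toEuclideanLin A x‖) :
    s ≤ √n * colDistSup A K := by
  refine le_of_mul_le_mul_right (hs.trans ?_) (norm_pos_iff.mpr hx0)
  calc ‖toEuclideanLin A x‖ = Metric.infDist (toEuclideanLin A x) K :=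
        (K.infDist_eq_norm_of_mem_orthogonal hx).symm
    _ ≤ ∑ j, ‖x j‖ * Metric.infDist (WithLp.toLp 2 (A.col j) : EuclideanSpace ℂ (Fin m)) K := by
        rw [toEuclideanLin_eq_sum_col]
        exact K.infDist_sum_smul_le _ _ _
    _ ≤ ∑ j, ‖x j‖ * colDistSup A K := by
        gcongr with j
        exact infDist_col_le_colDistSup A K j
    _ ≤ √n * colDistSup A K * ‖x‖ := by
        rw [← Finset.sum_mul, mul_right_comm]
        gcongr
        · exact colDistSup_nonneg A K
        · simpa using EuclideanSpace.sum_norm_le_sqrt_card_mul_norm x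

theorem Rig_le {r : ℕ} (A : Matrix (Fin m) (Fin n) ℂ)
    {K : Submodule ℂ (EuclideanSpace ℂ (Fin m))} (hK : Module.finrank ℂ K = r) :
    Rig r A ≤ colDistSup A K :=
  csInf_le ⟨0, by rintro _ ⟨K, -, rfl⟩; exact colDistSup_nonneg A K⟩ ⟨K, hK, rfl⟩

theorem le_Rig {r : ℕ} (A : Matrix (Fin m) (Fin n) ℂ) {c : ℝ}
    (hr : ∃ K : Submodule ℂ (EuclideanSpace ℂ (Fin m)), Module.finrank ℂ K = r)
    (hc : ∀ K : Submodule ℂ (EuclideanSpace ℂ (Fin m)), Module.finrank ℂ K = r →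
      c ≤ colDistSup A K) : c ≤ Rig r A := by
  obtain ⟨K, hK⟩ := hr
  exact le_csInf ⟨_, K, hK, rfl⟩ (by rintro _ ⟨K, hK, rfl⟩; exact hc K hK)

end Rigidity

/-- `σ_{r+1}(A)/√n ≤ Rig_r(A) ≤ σ_{r+1}(A)`. -/
theorem rigidity_singularValue_bounds {m n r : ℕ} (A : Matrix (Fin m) (Fin n) ℂ)
    (σ : Fin (min m n) → ℝ) (hσ : IsSingularValues A σ) (hr : r < min m n) :
    σ ⟨r, hr⟩ / Real.sqrt n ≤ Rig r A ∧ Rig r A ≤ σ ⟨r, hr⟩ := by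
  obtain ⟨u, w, hu, hw, hA⟩ := hσ.exists_orthonormal_toEuclideanLin_eq_sum
  obtain ⟨hanti, hnonneg, -⟩ := hσ
  have hAw : ∀ l, toEuclideanLin A (w l) = (σ l : ℂ) • u l := fun l => by
    simp [hA, orthonormal_iff_ite.mp hw]
  have hspan : Module.finrank ℂ (Submodule.span ℂ (Set.range (u ∘ Fin.castLE hr.le))) = r := by
    rw [finrank_span_eq_card (hu.comp _ (Fin.castLE_injective _)).linearIndependent,
      Fintype.card_fin]
  have hn : 0 < √(n : ℝ) :=
    Real.sqrt_pos.mpr (by exact_mod_cast (hr.trans_le (min_le_right m n)).pos)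
  refine ⟨le_Rig A ⟨_, hspan⟩ fun K hK => ?_, (Rig_le A hspan).trans ?_⟩
  · obtain ⟨x, hx0, hxK, hσx⟩ :=
      exists_ne_zero_apply_mem_orthogonal_and_mul_norm_le hu hw hanti hnonneg hAw K hr hK.le
    rw [div_le_iff₀' hn]
    exact le_sqrt_mul_colDistSup_of_mem_orthogonal A K hx0 hxK hσx
  · exact colDistSup_le (hnonneg _) fun x =>
      hA x ▸ infDist_sum_smul_inner_span_le hu hw hanti hnonneg hr x
end
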